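/- arXiv:2602.15804 — 5 statements merged into one kernel-verified Lean document; each statement's English description precedes it below -/
import Mathlib

section
/- Let $\Lambda = \{(t_1,\dots,t_n) \in \mathbb{R}^n : t_1 + \cdots + t_n = k\}$ be a hyperplane and let $f(t_1,\dots,t_n) = \lambda_1 \sum_{i=1}^{n-1} t_i^2 + \lambda_2 t_n^2 - 2\sum_{1 \le i < j \le n} t_i t_j$ with $\lambda_1, \lambda_2 > 0$ satisfying $\lambda_2 = \frac{n-1}{\lambda_1 - n + 2}$ (with $\lambda_1 > n-2$). Then the global minimum of $f$ on $\Lambda$ is attained at $t_1 = \cdots = t_{n-1} = \frac{k}{\lambda_1 + 1}$, $t_n = \frac{k(\lambda_1 - n + 2)}{\lambda_1 + 1}$. -/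
/-!
On all of `ℝⁿ`, not only on the hyperplane, `f t = ∑ᵢ wᵢ tᵢ² - (∑ᵢ tᵢ)²` with weights
`wᵢ = λ₁ + 1` for `i < n - 1` and `w_{n-1} = λ₂ + 1`. The relation between `λ₁` and `λ₂` says
exactly that `∑ᵢ 1/wᵢ = 1`, so `f ≥ 0` by the weighted Cauchy–Schwarz inequality
`(∑ᵢ tᵢ)² ≤ (∑ᵢ wᵢ tᵢ²)(∑ᵢ 1/wᵢ)`, with equality at `tᵢ = k / wᵢ`, which is the point `p`.
-/

open Finset

namespace Finset

theorem sq_sum_range_eq_sum_sq_add_two_mul {R : Type*} [CommSemiring R] (t : ℕ → R) (n : ℕ) :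
    (∑ i ∈ range n, t i) ^ 2
      = ∑ i ∈ range n, t i ^ 2 + 2 * ∑ i ∈ range n, ∑ j ∈ Ico (i + 1) n, t i * t j := by
  induction n with
  | zero => simp
  | succ n ih =>
    have hlast : ∀ i ∈ range n, ∑ j ∈ Ico (i + 1) (n + 1), t i * t j
        = ∑ j ∈ Ico (i + 1) n, t i * t j + t i * t n :=
      fun i hi => sum_Ico_succ_top (mem_range.1 hi) _
    rw [sum_range_succ (fun i => ∑ j ∈ Ico (i + 1) (n + 1), t i * t j), sum_congr rfl hlast,
      Ico_self, sum_empty, sum_add_distrib, ← sum_mul, sum_range_succ, sum_range_succ, add_sq, ih]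
    ring

section WeightedCauchySchwarz

variable {ι R : Type*} [Field R] {s : Finset ι} {w : ι → R}

theorem sq_sum_le_sum_mul_sq_of_sum_inv_eq_one [LinearOrder R] [IsStrictOrderedRing R]
    (hw : ∀ i ∈ s, 0 < w i) (hinv : ∑ i ∈ s, (w i)⁻¹ = 1) (f : ι → R) :
    (∑ i ∈ s, f i) ^ 2 ≤ ∑ i ∈ s, w i * f i ^ 2 := by
  simpa [hinv, div_inv_eq_mul, mul_comm] using
    sq_sum_div_le_sum_sq_div s f (g := fun i => (w i)⁻¹) fun i hi => inv_pos.2 (hw i hi)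

theorem sum_div_of_sum_inv_eq_one (hinv : ∑ i ∈ s, (w i)⁻¹ = 1) (c : R) :
    ∑ i ∈ s, c / w i = c := by
  simp_rw [div_eq_mul_inv, ← mul_sum, hinv, mul_one]

theorem sum_mul_sq_div_of_sum_inv_eq_one (hw : ∀ i ∈ s, w i ≠ 0)
    (hinv : ∑ i ∈ s, (w i)⁻¹ = 1) (c : R) :
    ∑ i ∈ s, w i * (c / w i) ^ 2 = c ^ 2 := by
  calc ∑ i ∈ s, w i * (c / w i) ^ 2 = ∑ i ∈ s, c ^ 2 * (w i)⁻¹ :=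
        sum_congr rfl fun i hi => by field_simp [hw i hi]
    _ = c ^ 2 := by rw [← mul_sum, hinv, mul_one]

end WeightedCauchySchwarz

end Finset

theorem sum_sq_sub_two_mul_sum_Ico_eq {R : Type*} [CommRing R] (a b : R) (t : ℕ → R) (m : ℕ) :
    a * ∑ i ∈ range m, t i ^ 2 + b * t m ^ 2
        - 2 * ∑ i ∈ range (m + 1), ∑ j ∈ Ico (i + 1) (m + 1), t i * t j
      = ∑ i ∈ range (m + 1), (if i = m then b + 1 else a + 1) * t i ^ 2
        - (∑ i ∈ range (m + 1), t i) ^ 2 := by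
  have hfirst : ∀ i ∈ range m, (if i = m then b + 1 else a + 1) * t i ^ 2 = (a + 1) * t i ^ 2 :=
    fun i hi => by rw [if_neg (mem_range.1 hi).ne]
  rw [sq_sum_range_eq_sum_sq_add_two_mul, sum_range_succ (fun i => _ * t i ^ 2), if_pos rfl,
    sum_congr rfl hfirst, ← mul_sum, sum_range_succ (fun i => t i ^ 2)]
  ring

theorem sum_range_succ_inv_ite_eq_one {K : Type*} [Field K] {a b : K} (m : ℕ) (ha : a ≠ 0)
    (hb : b ≠ 0) (hab : b * (a - m) = a) :
    ∑ i ∈ range (m + 1), (if i = m then b else a)⁻¹ = 1 := by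
  have hfirst : ∀ i ∈ range m, (if i = m then b else a)⁻¹ = a⁻¹ :=
    fun i hi => by rw [if_neg (mem_range.1 hi).ne]
  rw [sum_range_succ, sum_congr rfl hfirst, sum_const, card_range, nsmul_eq_mul, if_pos rfl]
  field_simp
  linear_combination -hab

theorem stmt_0_general (n : ℕ) (hn : 2 ≤ n) (k lam1 lam2 : ℝ)
    (h1 : 0 < lam1) (h2 : 0 < lam2)
    (hrel : lam2 * (lam1 - (n : ℝ) + 2) = (n : ℝ) - 1)
    (f : (ℕ → ℝ) → ℝ)
    (hf : ∀ t : ℕ → ℝ,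
      f t = lam1 * ∑ i ∈ range (n - 1), (t i) ^ 2 + lam2 * (t (n - 1)) ^ 2
        - 2 * ∑ i ∈ range n, ∑ j ∈ Ico (i + 1) n, t i * t j)
    (p : ℕ → ℝ)
    (hp : ∀ i, p i = if i = n - 1 then k * (lam1 - (n : ℝ) + 2) / (lam1 + 1)
      else k / (lam1 + 1)) :
    ∀ t : ℕ → ℝ, (∑ i ∈ range n, t i = k) → f p ≤ f t := by
  intro t _
  obtain ⟨m, rfl⟩ : ∃ m, n = m + 1 := ⟨n - 1, by omega⟩
  simp only [Nat.add_sub_cancel] at hf hp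
  push_cast at hrel hp
  set w : ℕ → ℝ := fun i => if i = m then lam2 + 1 else lam1 + 1
  have hw : ∀ i, 0 < w i := fun i => by dsimp only [w]; split_ifs <;> linarith
  have hrel' : (lam2 + 1) * (lam1 + 1 - m) = lam1 + 1 := by linear_combination hrel
  have hinv : ∑ i ∈ range (m + 1), (w i)⁻¹ = 1 :=
    sum_range_succ_inv_ite_eq_one m (by positivity) (by positivity) hrel'
  have hform : ∀ t, f t = ∑ i ∈ range (m + 1), w i * t i ^ 2 - (∑ i ∈ range (m + 1), t i) ^ 2 :=
    fun t => (hf t).trans (sum_sq_sub_two_mul_sum_Ico_eq _ _ _ _)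
  have hpw : p = fun i => k / w i := by
    funext i
    rw [hp]
    dsimp only [w]
    split_ifs
    · rw [div_eq_div_iff (by positivity) (by positivity)]
      linear_combination k * hrel'
    · rfl
  rw [hform, hform, hpw, sum_mul_sq_div_of_sum_inv_eq_one (fun i _ => (hw i).ne') hinv,
    sum_div_of_sum_inv_eq_one hinv, sub_self, sub_nonneg]
  exact sq_sum_le_sum_mul_sq_of_sum_inv_eq_one (fun i _ => hw i) hinv t

/-- Lemma (Tripathi): the constrained minimum of the quadratic form
`f(t) = λ₁ ∑_{i<n} tᵢ² + λ₂ tₙ² - 2 ∑_{i<j} tᵢ tⱼ` on the hyperplane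
`t₁ + ⋯ + tₙ = k` is attained at
`t₁ = ⋯ = t_{n-1} = k/(λ₁+1)`, `tₙ = k(λ₁-n+2)/(λ₁+1)`,
provided `λ₂ (λ₁ - n + 2) = n - 1`. -/
theorem stmt_0 (n : ℕ) (hn : 2 ≤ n) (k lam1 lam2 : ℝ)
    (h1 : 0 < lam1) (h2 : 0 < lam2) (hgt : (n : ℝ) - 2 < lam1)
    (hrel : lam2 * (lam1 - (n : ℝ) + 2) = (n : ℝ) - 1)
    (f : (ℕ → ℝ) → ℝ)
    (hf : ∀ t : ℕ → ℝ,
      f t = lam1 * ∑ i ∈ range (n - 1), (t i) ^ 2 + lam2 * (t (n - 1)) ^ 2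
        - 2 * ∑ i ∈ range n, ∑ j ∈ Ico (i + 1) n, t i * t j)
    (p : ℕ → ℝ)
    (hp : ∀ i, p i = if i = n - 1 then k * (lam1 - (n : ℝ) + 2) / (lam1 + 1)
      else k / (lam1 + 1)) :
    ∀ t : ℕ → ℝ, (∑ i ∈ range n, t i = k) → f p ≤ f t :=
  stmt_0_general n hn k lam1 lam2 h1 h2 hrel f hf p hp
end

section
/- For any integer $\ell \ge 2$ and real numbers $T_1, \dots, T_\ell$, one has $\ell \sum_{i=1}^{\ell-1} T_i^2 + \frac{\ell - 1}{2} T_\ell^2 - 2 \sum_{1 \le i < j \le \ell} T_i T_j \ge 0$, with equality if and only if $T_1 = T_2 = \cdots = T_{\ell-1} = \frac{1}{2} T_\ell$. -/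
open Finset

lemma peel_aux (g : ℕ → ℕ → ℝ) (m : ℕ) :
    ∑ i ∈ range (m+1), ∑ j ∈ Ico (i+1) (m+1), g i j
      = (∑ i ∈ range m, ∑ j ∈ Ico (i+1) m, g i j) + ∑ i ∈ range m, g i m := by
  rw [Finset.sum_range_succ, Ico_self, Finset.sum_empty, add_zero, ← Finset.sum_add_distrib]
  refine Finset.sum_congr rfl fun i hi => ?_
  rw [Finset.mem_range] at hi
  rw [Finset.sum_Ico_succ_top (by omega)]

lemma prod_id_aux (f : ℕ → ℝ) : ∀ m : ℕ,
    2 * ∑ i ∈ range m, ∑ j ∈ Ico (i+1) m, f i * f j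
      = (∑ i ∈ range m, f i)^2 - ∑ i ∈ range m, f i^2 := by
  intro m
  induction m with
  | zero => simp
  | succ m ih =>
    rw [peel_aux, Finset.sum_range_succ, Finset.sum_range_succ, ← Finset.sum_mul]
    linear_combination ih

lemma shift_sq_aux (f : ℕ → ℝ) (c : ℝ) : ∀ m : ℕ,
    ∑ i ∈ range m, (f i - c)^2
      = ∑ i ∈ range m, f i^2 - 2 * c * ∑ i ∈ range m, f i + m * c^2 := by
  intro m
  induction m with
  | zero => simp
  | succ m ih =>
    rw [Finset.sum_range_succ, Finset.sum_range_succ, Finset.sum_range_succ, ih]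
    push_cast
    ring

lemma sq_id_aux (f : ℕ → ℝ) : ∀ m : ℕ,
    ∑ i ∈ range m, ∑ j ∈ Ico (i+1) m, (f i - f j)^2
      = m * ∑ i ∈ range m, f i^2 - (∑ i ∈ range m, f i)^2 := by
  intro m
  induction m with
  | zero => simp
  | succ m ih =>
    rw [peel_aux, ih, shift_sq_aux, Finset.sum_range_succ, Finset.sum_range_succ]
    push_cast
    ring

/-- For `ℓ ≥ 2` and reals `T₁,…,T_ℓ`,
`ℓ ∑_{i<ℓ} Tᵢ² + (ℓ-1)/2 T_ℓ² - 2 ∑_{i<j} Tᵢ Tⱼ ≥ 0`,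
with equality iff `T₁ = ⋯ = T_{ℓ-1} = T_ℓ / 2`.  (Indices shifted to `0,…,ℓ-1`.) -/
theorem stmt_2 (ℓ : ℕ) (hl : 2 ≤ ℓ) (T : ℕ → ℝ) :
    0 ≤ (ℓ : ℝ) * ∑ i ∈ range (ℓ - 1), (T i) ^ 2
        + ((ℓ : ℝ) - 1) / 2 * (T (ℓ - 1)) ^ 2
        - 2 * ∑ i ∈ range ℓ, ∑ j ∈ Ico (i + 1) ℓ, T i * T j ∧
    ((ℓ : ℝ) * ∑ i ∈ range (ℓ - 1), (T i) ^ 2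
        + ((ℓ : ℝ) - 1) / 2 * (T (ℓ - 1)) ^ 2
        - 2 * ∑ i ∈ range ℓ, ∑ j ∈ Ico (i + 1) ℓ, T i * T j = 0
      ↔ ∀ i, i < ℓ - 1 → T i = T (ℓ - 1) / 2) := by
  obtain ⟨n, rfl⟩ : ∃ n, ℓ = n + 1 := ⟨ℓ - 1, by omega⟩
  simp only [Nat.add_sub_cancel]
  set t := T n with ht
  set A := ∑ i ∈ range n, T i with hA
  set B := ∑ i ∈ range n, (T i)^2 with hB
  set P := ∑ i ∈ range n, ∑ j ∈ Ico (i+1) n, (T i - T j)^2 with hP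
  set R := ∑ i ∈ range n, (T i - t/2)^2 with hR
  have hprod : 2 * ∑ i ∈ range (n+1), ∑ j ∈ Ico (i+1) (n+1), T i * T j
      = (A + t)^2 - (B + t^2) := by
    rw [prod_id_aux, Finset.sum_range_succ, Finset.sum_range_succ]
  have hPid : P = n * B - A^2 := sq_id_aux T n
  have hRid : R = B - 2 * (t/2) * A + n * (t/2)^2 := shift_sq_aux T (t/2) n
  have hQ : (↑(n+1) : ℝ) * B + ((↑(n+1) : ℝ) - 1) / 2 * t^2
      - 2 * ∑ i ∈ range (n+1), ∑ j ∈ Ico (i+1) (n+1), T i * T j = P + 2 * R := by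
    push_cast
    rw [hPid, hRid]
    linear_combination -hprod
  have hPnn : 0 ≤ P := Finset.sum_nonneg fun i _ => Finset.sum_nonneg fun j _ => sq_nonneg _
  have hRnn : 0 ≤ R := Finset.sum_nonneg fun i _ => sq_nonneg _
  rw [hQ]
  constructor
  · linarith
  constructor
  · intro h i hi
    have hR0 : R = 0 := by linarith
    have := (Finset.sum_eq_zero_iff_of_nonneg (fun i _ => sq_nonneg (T i - t/2))).mp hR0
      i (Finset.mem_range.mpr hi)
    have h2 : T i - t/2 = 0 := by nlinarith [this]
    linarith
  · intro h
    have hR0 : R = 0 := Finset.sum_eq_zero fun i hi => by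
      rw [h i (Finset.mem_range.mp hi)]; ring
    have hP0 : P = 0 := Finset.sum_eq_zero fun i hi => Finset.sum_eq_zero fun j hj => by
      rw [Finset.mem_Ico] at hj
      rw [h i (by rw [Finset.mem_range] at hi; omega), h j (by omega)]
      ring
    rw [hR0, hP0]; ring
end

section
/- Let $V$ be a real inner product space with an almost contact structure: a linear map $\phi$, a unit vector $\xi$, and the linear form $\eta(Z) = g(Z, \xi)$, satisfying $\phi^2 Z = -Z + \eta(Z)\xi$ and $g(\phi Z_1, \phi Z_2) = g(Z_1, Z_2) - \eta(Z_1)\eta(Z_2)$. Let $R$ be the generalized Sasakian space form curvature tensor with constants $c_1, c_2, c_3$: $R(Z_1,Z_2,Z_3,Z_4) = c_1\{g(Z_2,Z_3)g(Z_1,Z_4) - g(Z_1,Z_3)g(Z_2,Z_4)\} + c_2\{g(Z_1,\phi Z_3)g(\phi Z_2,Z_4) - g(Z_2,\phi Z_3)g(\phi Z_1,Z_4) + 2g(Z_1,\phi Z_2)g(\phi Z_3,Z_4)\} + c_3\{\eta(Z_1)\eta(Z_3)g(Z_2,Z_4) - \eta(Z_2)\eta(Z_3)g(Z_1,Z_4)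 + g(Z_1,Z_3)\eta(Z_2)\eta(Z_4) - g(Z_2,Z_3)\eta(Z_1)\eta(Z_4)\}$. If $\{v_1,\dots,v_\ell\}$ is an orthonormal family whose span contains $\xi$, then $\sum_{i,j=1}^{\ell} R(v_i,v_j,v_j,v_i) = c_1 \ell(\ell-1) + 3c_2\|Q\|^2 - 2(\ell-1)c_3$, where $\|Q\|^2 = \sum_i \|Qv_i\|^2$ and $Qv_i$ is the projection of $\phi v_i$ onto $\mathrm{span}\{v_1,\dots,v_\ell\}$. -/
/-!
The almost contact identities force `φ ξ = 0`, then `η ∘ φ = 0` (compare `φ³` computed in two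
ways), and hence `φ` is skew-adjoint. With skewness, `R(x, y, y, x)` for orthonormal `x ≠ y`
collapses to `c₁ + 3 c₂ ⟪φ x, y⟫² - c₃ (η(x)² + η(y)²)`, while the diagonal terms vanish.
Summing over the family, `∑ⱼ ⟪φ vᵢ, vⱼ⟫²` is `‖Q vᵢ‖²`, and `∑ᵢ η(vᵢ)² = ‖ξ‖² = 1` because `ξ`
lies in the span.
-/

open scoped InnerProductSpace

section Projection

variable {𝕜 E ι : Type*} [RCLike 𝕜] [NormedAddCommGroup E] [InnerProductSpace 𝕜 E] [Fintype ι]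
  {v : ι → E} [(Submodule.span 𝕜 (Set.range v)).HasOrthogonalProjection]

theorem Orthonormal.starProjection_span_range (hv : Orthonormal 𝕜 v) (w : E) :
    (Submodule.span 𝕜 (Set.range v)).starProjection w = ∑ i, ⟪v i, w⟫_𝕜 • v i := by
  refine Submodule.eq_starProjection_of_mem_orthogonal
    (Submodule.sum_mem _ fun i _ => Submodule.smul_mem _ _ (Submodule.subset_span ⟨i, rfl⟩)) ?_
  rw [Submodule.mem_orthogonal]
  intro u hu
  induction hu using Submodule.span_induction with
  | mem x hx =>
      obtain ⟨i, rfl⟩ := hx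
      rw [inner_sub_right, hv.inner_right_fintype, sub_self]
  | zero => exact inner_zero_left _
  | add x y _ _ hx hy => rw [inner_add_left, hx, hy, add_zero]
  | smul a x _ hx => rw [inner_smul_left, hx, mul_zero]

end Projection

section RealProjection

variable {E ι : Type*} [NormedAddCommGroup E] [InnerProductSpace ℝ E] [Fintype ι]
  {v : ι → E} [(Submodule.span ℝ (Set.range v)).HasOrthogonalProjection]

theorem Orthonormal.norm_orthogonalProjectionOnto_span_range_sq (hv : Orthonormal ℝ v) (w : E) :
    ‖((Submodule.span ℝ (Set.range v)).orthogonalProjectionOnto w : E)‖ ^ 2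
      = ∑ i, ⟪v i, w⟫_ℝ ^ 2 := by
  rw [← Submodule.starProjection_apply, hv.starProjection_span_range, ← real_inner_self_eq_norm_sq,
    hv.inner_sum]
  simp [sq]

theorem Orthonormal.sum_inner_sq_eq_norm_sq (hv : Orthonormal ℝ v) {w : E}
    (hw : w ∈ Submodule.span ℝ (Set.range v)) : ∑ i, ⟪v i, w⟫_ℝ ^ 2 = ‖w‖ ^ 2 := by
  rw [← hv.norm_orthogonalProjectionOnto_span_range_sq, ← Submodule.starProjection_apply,
    Submodule.starProjection_eq_self_iff.mpr hw]

end RealProjection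

namespace AlmostContact

variable {V : Type*} [NormedAddCommGroup V] [InnerProductSpace ℝ V] {φ : V →ₗ[ℝ] V} {ξ : V}

theorem apply_reeb_eq_zero (hξ : ‖ξ‖ = 1)
    (hcompat : ∀ z w, ⟪φ z, φ w⟫_ℝ = ⟪z, w⟫_ℝ - ⟪z, ξ⟫_ℝ * ⟪w, ξ⟫_ℝ) : φ ξ = 0 := by
  have hξξ : ⟪ξ, ξ⟫_ℝ = 1 := by rw [real_inner_self_eq_norm_sq, hξ, one_pow]
  rw [← inner_self_eq_zero (𝕜 := ℝ), hcompat, hξξ]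
  norm_num

theorem inner_apply_reeb_eq_zero (hξ : ‖ξ‖ = 1)
    (hphi2 : ∀ z, φ (φ z) = -z + ⟪z, ξ⟫_ℝ • ξ)
    (hcompat : ∀ z w, ⟪φ z, φ w⟫_ℝ = ⟪z, w⟫_ℝ - ⟪z, ξ⟫_ℝ * ⟪w, ξ⟫_ℝ) (z : V) :
    ⟪φ z, ξ⟫_ℝ = 0 := by
  have hcube : φ (φ (φ z)) = -φ z + ⟪φ z, ξ⟫_ℝ • ξ := hphi2 (φ z)
  rw [hphi2 z, map_add, map_neg, map_smul, apply_reeb_eq_zero hξ hcompat, smul_zero, add_zero,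
    left_eq_add, smul_eq_zero] at hcube
  exact hcube.resolve_right (norm_ne_zero_iff.mp (by rw [hξ]; exact one_ne_zero))

theorem inner_apply_eq_neg_inner_apply (hξ : ‖ξ‖ = 1)
    (hphi2 : ∀ z, φ (φ z) = -z + ⟪z, ξ⟫_ℝ • ξ)
    (hcompat : ∀ z w, ⟪φ z, φ w⟫_ℝ = ⟪z, w⟫_ℝ - ⟪z, ξ⟫_ℝ * ⟪w, ξ⟫_ℝ) (x y : V) :
    ⟪φ x, y⟫_ℝ = -⟪x, φ y⟫_ℝ := by
  have h := hcompat x (φ y)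
  rw [hphi2, inner_add_right, inner_neg_right, real_inner_smul_right,
    inner_apply_reeb_eq_zero hξ hphi2 hcompat, inner_apply_reeb_eq_zero hξ hphi2 hcompat] at h
  linarith

end AlmostContact

section Curvature

variable {V : Type*} [NormedAddCommGroup V] [InnerProductSpace ℝ V]

def generalizedSasakianCurvature (c₁ c₂ c₃ : ℝ) (φ : V →ₗ[ℝ] V) (ξ : V) (Z1 Z2 Z3 Z4 : V) : ℝ :=
  c₁ * (⟪Z2, Z3⟫_ℝ * ⟪Z1, Z4⟫_ℝ - ⟪Z1, Z3⟫_ℝ * ⟪Z2, Z4⟫_ℝ)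
    + c₂ * (⟪Z1, φ Z3⟫_ℝ * ⟪φ Z2, Z4⟫_ℝ - ⟪Z2, φ Z3⟫_ℝ * ⟪φ Z1, Z4⟫_ℝ
        + 2 * ⟪Z1, φ Z2⟫_ℝ * ⟪φ Z3, Z4⟫_ℝ)
    + c₃ * (⟪Z1, ξ⟫_ℝ * ⟪Z3, ξ⟫_ℝ * ⟪Z2, Z4⟫_ℝ - ⟪Z2, ξ⟫_ℝ * ⟪Z3, ξ⟫_ℝ * ⟪Z1, Z4⟫_ℝ
        + ⟪Z1, Z3⟫_ℝ * ⟪Z2, ξ⟫_ℝ * ⟪Z4, ξ⟫_ℝ - ⟪Z2, Z3⟫_ℝ * ⟪Z1, ξ⟫_ℝ * ⟪Z4, ξ⟫_ℝ)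

variable {c₁ c₂ c₃ : ℝ} {φ : V →ₗ[ℝ] V} {ξ : V}

theorem generalizedSasakianCurvature_sectional (hskew : ∀ x y, ⟪φ x, y⟫_ℝ = -⟪x, φ y⟫_ℝ)
    (x y : V) :
    generalizedSasakianCurvature c₁ c₂ c₃ φ ξ x y y x
      = c₁ * (‖x‖ ^ 2 * ‖y‖ ^ 2 - ⟪x, y⟫_ℝ ^ 2) + 3 * c₂ * ⟪φ x, y⟫_ℝ ^ 2
        + c₃ * (2 * ⟪x, y⟫_ℝ * ⟪x, ξ⟫_ℝ * ⟪y, ξ⟫_ℝ - ‖x‖ ^ 2 * ⟪y, ξ⟫_ℝ ^ 2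
          - ‖y‖ ^ 2 * ⟪x, ξ⟫_ℝ ^ 2) := by
  have hyy : ⟪y, φ y⟫_ℝ = 0 := by
    have := hskew y y
    rw [real_inner_comm] at this
    linarith
  have hxy : ⟪x, φ y⟫_ℝ = -⟪φ x, y⟫_ℝ := by rw [hskew, neg_neg]
  have hyx : ⟪φ y, x⟫_ℝ = -⟪φ x, y⟫_ℝ := by rw [real_inner_comm, hxy]
  rw [generalizedSasakianCurvature, ← real_inner_self_eq_norm_sq, ← real_inner_self_eq_norm_sq,
    real_inner_comm x y, hxy, hyx, hyy]
  ring

theorem Orthonormal.sum_generalizedSasakianCurvature {ι : Type*} [Fintype ι] {v : ι → V}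
    (hv : Orthonormal ℝ v) [(Submodule.span ℝ (Set.range v)).HasOrthogonalProjection]
    (hskew : ∀ x y, ⟪φ x, y⟫_ℝ = -⟪x, φ y⟫_ℝ) :
    ∑ i, ∑ j, generalizedSasakianCurvature c₁ c₂ c₃ φ ξ (v i) (v j) (v j) (v i)
      = c₁ * Fintype.card ι * (Fintype.card ι - 1)
        + 3 * c₂ * ∑ i,
            ‖((Submodule.span ℝ (Set.range v)).orthogonalProjectionOnto (φ (v i)) : V)‖ ^ 2
        - 2 * (Fintype.card ι - 1) * c₃ * ∑ i, ⟪v i, ξ⟫_ℝ ^ 2 := by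
  classical
  simp_rw [generalizedSasakianCurvature_sectional hskew, hv.norm_eq_one,
    hv.norm_orthogonalProjectionOnto_span_range_sq, real_inner_comm _ (φ _),
    orthonormal_iff_ite.mp hv]
  simp only [one_pow, mul_one, one_mul, ite_pow, mul_ite, ite_mul, mul_zero, zero_mul, ne_eq,
    OfNat.ofNat_ne_zero, not_false_eq_true, zero_pow, Finset.sum_add_distrib,
    Finset.sum_sub_distrib, Finset.sum_ite_eq, Finset.mem_univ, if_true, ← Finset.mul_sum,
    Finset.sum_const, Finset.card_univ, nsmul_eq_mul]
  simp only [mul_assoc, ← sq, ← Finset.mul_sum]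
  ring

end Curvature

/-- For the generalized Sasakian space form curvature tensor with constants
`c₁, c₂, c₃` on an inner product space with almost contact structure `(φ, ξ, η)`,
and an orthonormal family `v₁,…,v_ℓ` whose span contains `ξ`:
`∑_{i,j} R(vᵢ,vⱼ,vⱼ,vᵢ) = c₁ ℓ(ℓ-1) + 3c₂ ‖Q‖² - 2(ℓ-1)c₃`, where `Q vᵢ` is the
projection of `φ vᵢ` onto `span{v₁,…,v_ℓ}`. -/
theorem stmt_13 {V : Type*} [NormedAddCommGroup V] [InnerProductSpace ℝ V]
    [FiniteDimensional ℝ V]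
    (c₁ c₂ c₃ : ℝ) (φ : V →ₗ[ℝ] V) (ξ : V) (hξ : ‖ξ‖ = 1)
    (hphi2 : ∀ z, φ (φ z) = -z + ⟪z, ξ⟫_ℝ • ξ)
    (hcompat : ∀ z w, ⟪φ z, φ w⟫_ℝ = ⟪z, w⟫_ℝ - ⟪z, ξ⟫_ℝ * ⟪w, ξ⟫_ℝ)
    (ℓ : ℕ) (v : Fin ℓ → V) (hv : Orthonormal ℝ v)
    (hxi : ξ ∈ Submodule.span ℝ (Set.range v))
    (R : V → V → V → V → ℝ)
    (hR : ∀ Z1 Z2 Z3 Z4, R Z1 Z2 Z3 Z4 =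
      c₁ * (⟪Z2, Z3⟫_ℝ * ⟪Z1, Z4⟫_ℝ - ⟪Z1, Z3⟫_ℝ * ⟪Z2, Z4⟫_ℝ)
      + c₂ * (⟪Z1, φ Z3⟫_ℝ * ⟪φ Z2, Z4⟫_ℝ - ⟪Z2, φ Z3⟫_ℝ * ⟪φ Z1, Z4⟫_ℝ
          + 2 * ⟪Z1, φ Z2⟫_ℝ * ⟪φ Z3, Z4⟫_ℝ)
      + c₃ * (⟪Z1, ξ⟫_ℝ * ⟪Z3, ξ⟫_ℝ * ⟪Z2, Z4⟫_ℝ - ⟪Z2, ξ⟫_ℝ * ⟪Z3, ξ⟫_ℝ * ⟪Z1, Z4⟫_ℝ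
          + ⟪Z1, Z3⟫_ℝ * ⟪Z2, ξ⟫_ℝ * ⟪Z4, ξ⟫_ℝ - ⟪Z2, Z3⟫_ℝ * ⟪Z1, ξ⟫_ℝ * ⟪Z4, ξ⟫_ℝ)) :
    ∑ i : Fin ℓ, ∑ j : Fin ℓ, R (v i) (v j) (v j) (v i)
      = c₁ * ℓ * ((ℓ : ℝ) - 1)
        + 3 * c₂ * ∑ i : Fin ℓ,
            ‖(Submodule.orthogonalProjectionOnto (Submodule.span ℝ (Set.range v)) (φ (v i)) : V)‖ ^ 2
        - 2 * ((ℓ : ℝ) - 1) * c₃ := by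
  have hskew := AlmostContact.inner_apply_eq_neg_inner_apply hξ hphi2 hcompat
  obtain rfl : R = generalizedSasakianCurvature c₁ c₂ c₃ φ ξ := by
    funext Z1 Z2 Z3 Z4
    exact hR Z1 Z2 Z3 Z4
  rw [hv.sum_generalizedSasakianCurvature hskew, hv.sum_inner_sq_eq_norm_sq hxi, hξ,
    Fintype.card_fin]
  ring
end

section
/- Let $\ell \ge 2$, $s \ge 1$ be integers and let real numbers $T^{\alpha}_{ij}$ ($1 \le i,j \le \ell$, $1 \le \alpha \le s$) be symmetric in $i,j$. Then for each $\alpha$, $\sum_{i=1}^{\ell-1}\ell (T^{\alpha}_{ii})^2 + (\ell+1)\sum_{i=1}^{\ell-1}(T^{\alpha}_{i\ell})^2 + 2(\ell+1)\sum_{1\le i<j\le \ell-1}(T^{\alpha}_{ij})^2 - 2\sum_{1\le i<j\le \ell} T^{\alpha}_{ii}T^{\alpha}_{jj} + \frac{\ell-1}{2}(T^{\alpha}_{\ell\ell})^2 \ge 0$, with equality if and only if $T^{\alpha}_{ij} = 0$ for all $i \ne j$ and $T^{\alpha}_{11} = \cdots = T^{\alpha}_{\ell-1,\ell-1} = \frac{1}{2}T^{\alpha}_{\ell\ell}$.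 -/
set_option maxHeartbeats 1000000

open Finset

lemma split_double (n : ℕ) (f : ℕ → ℕ → ℝ) :
    ∑ i ∈ range (n+1), ∑ j ∈ Ico (i+1) (n+1), f i j
      = (∑ i ∈ range n, ∑ j ∈ Ico (i+1) n, f i j) + ∑ i ∈ range n, f i n := by
  rw [Finset.sum_range_succ, Finset.Ico_self, Finset.sum_empty, add_zero,
    ← Finset.sum_add_distrib]
  refine Finset.sum_congr rfl fun i hi => ?_
  rw [Finset.mem_range] at hi
  rw [Finset.sum_Ico_succ_top (by omega)]

lemma sq_sum_eq (n : ℕ) (a : ℕ → ℝ) :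
    (∑ i ∈ range n, a i)^2
      = ∑ i ∈ range n, (a i)^2 + 2 * ∑ i ∈ range n, ∑ j ∈ Ico (i+1) n, a i * a j := by
  induction n with
  | zero => simp
  | succ n ih =>
      rw [Finset.sum_range_succ, Finset.sum_range_succ (fun i => (a i)^2),
        split_double n (fun i j => a i * a j), add_sq, ih, ← Finset.sum_mul]
      ring

/-- Pointwise nonnegativity of the quadratic polynomial `𝒫^{ℋ𝒱}` in a fixed
horizontal direction `α`: for a symmetric array `T^α_{ij}` (indices `0,…,ℓ-1`),
`ℓ ∑_{i<ℓ-1} (T^α_{ii})² + (ℓ+1) ∑_{i<ℓ-1} (T^α_{i,ℓ-1})²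
 + 2(ℓ+1) ∑_{i<j<ℓ-1} (T^α_{ij})² - 2 ∑_{i<j} T^α_{ii} T^α_{jj}
 + (ℓ-1)/2 (T^α_{ℓ-1,ℓ-1})² ≥ 0`,
with equality iff all off-diagonal entries vanish and
`T^α_{00} = ⋯ = T^α_{ℓ-2,ℓ-2} = T^α_{ℓ-1,ℓ-1}/2`. -/
theorem stmt_15 (ℓ s : ℕ) (hl : 2 ≤ ℓ) (hs : 1 ≤ s)
    (T : ℕ → ℕ → ℕ → ℝ)
    (hsym : ∀ α i j, T α i j = T α j i) :
    ∀ α, α < s →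
      (0 ≤ (ℓ : ℝ) * ∑ i ∈ range (ℓ - 1), (T α i i) ^ 2
          + ((ℓ : ℝ) + 1) * ∑ i ∈ range (ℓ - 1), (T α i (ℓ - 1)) ^ 2
          + 2 * ((ℓ : ℝ) + 1) * ∑ i ∈ range (ℓ - 1), ∑ j ∈ Ico (i + 1) (ℓ - 1), (T α i j) ^ 2
          - 2 * ∑ i ∈ range ℓ, ∑ j ∈ Ico (i + 1) ℓ, T α i i * T α j j
          + ((ℓ : ℝ) - 1) / 2 * (T α (ℓ - 1) (ℓ - 1)) ^ 2) ∧
      ((ℓ : ℝ) * ∑ i ∈ range (ℓ - 1), (T α i i) ^ 2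
          + ((ℓ : ℝ) + 1) * ∑ i ∈ range (ℓ - 1), (T α i (ℓ - 1)) ^ 2
          + 2 * ((ℓ : ℝ) + 1) * ∑ i ∈ range (ℓ - 1), ∑ j ∈ Ico (i + 1) (ℓ - 1), (T α i j) ^ 2
          - 2 * ∑ i ∈ range ℓ, ∑ j ∈ Ico (i + 1) ℓ, T α i i * T α j j
          + ((ℓ : ℝ) - 1) / 2 * (T α (ℓ - 1) (ℓ - 1)) ^ 2 = 0
        ↔ (∀ i j, i < ℓ → j < ℓ → i ≠ j → T α i j = 0) ∧
          (∀ i, i < ℓ - 1 → T α i i = T α (ℓ - 1) (ℓ - 1) / 2)) := by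
  intro α hα
  obtain ⟨n, rfl⟩ : ∃ n, ℓ = n + 1 := ⟨ℓ - 1, by omega⟩
  have hn : 1 ≤ n := by omega
  simp only [Nat.add_sub_cancel]
  set b : ℝ := T α n n with hb
  set S1 : ℝ := ∑ i ∈ range n, (T α i n) ^ 2 with hS1
  set S2 : ℝ := ∑ i ∈ range n, ∑ j ∈ Ico (i + 1) n, (T α i j) ^ 2 with hS2
  set Sd : ℝ := ∑ i ∈ range n, (T α i i) ^ 2 with hSd
  set Ss : ℝ := ∑ i ∈ range n, T α i i with hSs
  set Q : ℝ := ∑ i ∈ range n, (T α i i - b / 2) ^ 2 with hQ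
  set C : ℝ := ∑ i ∈ range n, ∑ j ∈ Ico (i + 1) n, T α i i * T α j j with hC
  have hcross : ∑ i ∈ range (n+1), ∑ j ∈ Ico (i + 1) (n+1), T α i i * T α j j
      = C + Ss * b := by
    rw [split_double n (fun i j => T α i i * T α j j), ← Finset.sum_mul]
  have hsq : Ss ^ 2 = Sd + 2 * C := sq_sum_eq n (fun i => T α i i)
  have hQex : Q = Sd - b * Ss + (n : ℝ) * (b/2)^2 := by
    rw [hQ]
    simp only [sub_sq, Finset.sum_add_distrib, Finset.sum_sub_distrib,
      ← Finset.mul_sum, ← Finset.sum_mul, Finset.sum_const, Finset.card_range,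
      nsmul_eq_mul]
    rw [← hSd, ← hSs]; ring
  -- main identity
  have hE : (↑(n+1) : ℝ) * Sd + ((↑(n+1) : ℝ) + 1) * S1
      + 2 * ((↑(n+1) : ℝ) + 1) * S2
      - 2 * ∑ i ∈ range (n+1), ∑ j ∈ Ico (i + 1) (n+1), T α i i * T α j j
      + ((↑(n+1) : ℝ) - 1) / 2 * b ^ 2
      = ((↑(n+1) : ℝ) + 1) * S1 + 2 * ((↑(n+1) : ℝ) + 1) * S2
        + ((n : ℝ) * Sd - Ss ^ 2) + 2 * Q := by
    have h2 : C = (Ss ^ 2 - Sd) / 2 := by linarith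
    rw [hcross, h2, hQex]; push_cast; ring
  -- nonnegativity of the pieces
  have hS1nn : 0 ≤ S1 := Finset.sum_nonneg fun i _ => sq_nonneg _
  have hS2nn : 0 ≤ S2 :=
    Finset.sum_nonneg fun i _ => Finset.sum_nonneg fun j _ => sq_nonneg _
  have hQnn : 0 ≤ Q := Finset.sum_nonneg fun i _ => sq_nonneg _
  have hCSnn : 0 ≤ (n : ℝ) * Sd - Ss ^ 2 := by
    have := sq_sum_le_card_mul_sum_sq (s := range n) (f := fun i => T α i i)
    rw [Finset.card_range] at this
    rw [← hSs, ← hSd] at this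
    linarith
  have hnpos : (0 : ℝ) < (↑(n+1) : ℝ) + 1 := by positivity
  constructor
  · rw [hE]; positivity
  rw [hE]
  constructor
  · intro h0
    have h1nn : 0 ≤ ((↑(n+1) : ℝ) + 1) * S1 := by positivity
    have h2nn : 0 ≤ 2 * ((↑(n+1) : ℝ) + 1) * S2 := by positivity
    have e1 : ((↑(n+1) : ℝ) + 1) * S1 = 0 := by linarith
    have e2 : 2 * ((↑(n+1) : ℝ) + 1) * S2 = 0 := by linarith
    have hQz : Q = 0 := by linarith
    have hS1z : S1 = 0 :=
      (mul_eq_zero.mp e1).resolve_left (ne_of_gt hnpos)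
    have hS2z : S2 = 0 := by
      rcases mul_eq_zero.mp e2 with h | h
      · rcases mul_eq_zero.mp h with h' | h'
        · norm_num at h'
        · exact absurd h' (ne_of_gt hnpos)
      · exact h
    -- extract pointwise vanishing
    have hdiag : ∀ i, i < n → T α i i = b / 2 := by
      intro i hi
      have := (Finset.sum_eq_zero_iff_of_nonneg (fun i _ => sq_nonneg
        (T α i i - b / 2))).mp hQz i (Finset.mem_range.mpr hi)
      have := sq_eq_zero_iff.mp this
      linarith
    have hlast : ∀ i, i < n → T α i n = 0 := by
      intro i hi
      have := (Finset.sum_eq_zero_iff_of_nonneg (fun i _ => sq_nonneg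
        (T α i n))).mp hS1z i (Finset.mem_range.mpr hi)
      exact sq_eq_zero_iff.mp this
    have hoff : ∀ i j, i < j → j < n → T α i j = 0 := by
      intro i j hij hj
      have h1 := (Finset.sum_eq_zero_iff_of_nonneg (fun i _ =>
        Finset.sum_nonneg fun j _ => sq_nonneg (T α i j))).mp hS2z i
        (Finset.mem_range.mpr (by omega))
      have h2 := (Finset.sum_eq_zero_iff_of_nonneg (fun j _ => sq_nonneg
        (T α i j))).mp h1 j (Finset.mem_Ico.mpr ⟨by omega, hj⟩)
      exact sq_eq_zero_iff.mp h2
    refine ⟨?_, hdiag⟩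
    intro i j hi hj hne
    have key : ∀ i j, i < j → j < n + 1 → T α i j = 0 := by
      intro i j hij hj
      rcases Nat.lt_or_ge j n with hjn | hjn
      · exact hoff i j hij hjn
      · have : j = n := by omega
        subst this
        exact hlast i (by omega)
    rcases Nat.lt_or_ge i j with h | h
    · exact key i j h hj
    · rw [hsym]
      exact key j i (by omega) hi
  · rintro ⟨hoff, hdiag⟩
    have hS1z : S1 = 0 := Finset.sum_eq_zero fun i hi => by
      rw [Finset.mem_range] at hi
      rw [hoff i n (by omega) (by omega) (by omega)]; ring
    have hS2z : S2 = 0 := Finset.sum_eq_zero fun i hi =>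
      Finset.sum_eq_zero fun j hj => by
        rw [Finset.mem_range] at hi
        rw [Finset.mem_Ico] at hj
        rw [hoff i j (by omega) (by omega) (by omega)]; ring
    have hQz : Q = 0 := Finset.sum_eq_zero fun i hi => by
      rw [Finset.mem_range] at hi
      rw [hdiag i hi]; ring
    have hSseq : Ss = (n : ℝ) * (b / 2) := by
      rw [hSs, Finset.sum_congr rfl fun i hi => hdiag i (Finset.mem_range.mp hi),
        Finset.sum_const, Finset.card_range, nsmul_eq_mul]
    have hSdeq : Sd = (n : ℝ) * (b / 2) ^ 2 := by
      rw [hSd, Finset.sum_congr rfl fun i hi => by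
        rw [hdiag i (Finset.mem_range.mp hi)], Finset.sum_const,
        Finset.card_range, nsmul_eq_mul]
    have hCSz : (n : ℝ) * Sd - Ss ^ 2 = 0 := by
      rw [hSseq, hSdeq]; ring
    rw [hS1z, hS2z, hQz, hCSz]; ring
end

section
/- For integers $\ell, s \ge 3$ and symmetric real arrays $T^{\alpha}_{ij}$ ($i,j \le \ell$, $\alpha \le s$) and antisymmetric real arrays $A^{\beta}_{ij}$ ($i,j \le s$, $\beta \le \ell$) (antisymmetric: $A^{\beta}_{ij} = -A^{\beta}_{ji}$, so $A^{\beta}_{ii}=0$), the quantity $\sum_{\alpha=1}^s\Big[\ell\sum_{i=1}^{\ell-1}(T^{\alpha}_{ii})^2 + \frac{\ell-1}{2}(T^{\alpha}_{\ell\ell})^2 - 2\sum_{1\le i<j\le\ell}T^{\alpha}_{ii}T^{\alpha}_{jj} + (\ell+1)\sum_{i=1}^{\ell-1}(T^{\alpha}_{i\ell})^2 + 2(\ell+1)\sum_{1\le i<j\le\ell-1}(T^{\alpha}_{ij})^2\Big] + \sum_{\beta=1}^\ell\Big[(s+3)\sum_{i=1}^{s-1}(A^{\beta}_{ii})^2 +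 \frac{s+5}{2}(A^{\beta}_{ss})^2 + 2(s+3)\sum_{1\le i<j\le s-1}(A^{\beta}_{ij})^2 + (s+5)\sum_{i=1}^{s-1}(A^{\beta}_{is})^2 - \sum_{i,j=1}^{s}A^{\beta}_{ii}A^{\beta}_{jj}\Big] \ge 0$. -/
open Finset

lemma sq_sum_expand (m : ℕ) (a : ℕ → ℝ) :
    (∑ i ∈ range m, a i) ^ 2
      = ∑ i ∈ range m, (a i) ^ 2
        + 2 * ∑ i ∈ range m, ∑ j ∈ Ico (i + 1) m, a i * a j := by
  induction m with
  | zero => simp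
  | succ n ih =>
    have houter : ∑ i ∈ range (n + 1), ∑ j ∈ Ico (i + 1) (n + 1), a i * a j
        = ∑ i ∈ range n, (∑ j ∈ Ico (i + 1) n, a i * a j + a i * a n) := by
      rw [sum_range_succ]
      simp only [Ico_self, sum_empty, add_zero]
      refine sum_congr rfl fun i hi => ?_
      have hi' : i + 1 ≤ n := by
        have := mem_range.mp hi; omega
      rw [Finset.sum_Ico_succ_top hi']
    rw [sum_range_succ, add_sq, ih, houter, sum_add_distrib,
      sum_range_succ (fun i => (a i)^2), ← Finset.sum_mul]
    ring

lemma T_part (ℓ : ℕ) (hl : 3 ≤ ℓ) (a : ℕ → ℝ) :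
    0 ≤ (ℓ : ℝ) * ∑ i ∈ range (ℓ - 1), (a i) ^ 2
        + ((ℓ : ℝ) - 1) / 2 * (a (ℓ - 1)) ^ 2
        - 2 * ∑ i ∈ range ℓ, ∑ j ∈ Ico (i + 1) ℓ, a i * a j := by
  obtain ⟨n, rfl⟩ : ∃ n, ℓ = n + 1 := ⟨ℓ - 1, by omega⟩
  have hn : 2 ≤ n := by omega
  simp only [Nat.add_sub_cancel]
  set P := ∑ i ∈ range n, (a i) ^ 2 with hPdef
  set S := ∑ i ∈ range n, a i with hSdef
  set b := a n with hbdef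
  have hexp := sq_sum_expand (n + 1) a
  rw [sum_range_succ, sum_range_succ (fun i => (a i)^2)] at hexp
  have hcs : S ^ 2 ≤ (n : ℝ) * P := by
    simpa using sq_sum_le_card_mul_sum_sq (s := range n) (f := a)
  have hP : 0 ≤ P := sum_nonneg fun i _ => sq_nonneg _
  have hn' : (2 : ℝ) ≤ (n : ℝ) := by exact_mod_cast hn
  push_cast
  nlinarith [sq_nonneg (2 * S - (n : ℝ) * b), mul_nonneg (by linarith : (0:ℝ) ≤ (n:ℝ)) hP,
    mul_le_mul_of_nonneg_left hcs (by linarith : (0:ℝ) ≤ 2)]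

/-- Nonnegativity of the full quadratic polynomial `𝒫^{ℋ𝒱}` from the proof of the
general Casorati inequality: for a symmetric array `T^α_{ij}` (`i,j < ℓ`, `α < s`)
and an antisymmetric array `A^β_{ij}` (`i,j < s`, `β < ℓ`), the displayed sum of
the `T`-part and the `A`-part is nonnegative. (Indices shifted to start at `0`.) -/
theorem stmt_16 (ℓ s : ℕ) (hl : 3 ≤ ℓ) (hs : 3 ≤ s)
    (T : ℕ → ℕ → ℕ → ℝ) (A : ℕ → ℕ → ℕ → ℝ)
    (hsymT : ∀ α i j, T α i j = T α j i)
    (hantA : ∀ β i j, A β i j = -A β j i) :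
    0 ≤ (∑ α ∈ range s,
          ((ℓ : ℝ) * ∑ i ∈ range (ℓ - 1), (T α i i) ^ 2
            + ((ℓ : ℝ) - 1) / 2 * (T α (ℓ - 1) (ℓ - 1)) ^ 2
            - 2 * ∑ i ∈ range ℓ, ∑ j ∈ Ico (i + 1) ℓ, T α i i * T α j j
            + ((ℓ : ℝ) + 1) * ∑ i ∈ range (ℓ - 1), (T α i (ℓ - 1)) ^ 2
            + 2 * ((ℓ : ℝ) + 1) * ∑ i ∈ range (ℓ - 1), ∑ j ∈ Ico (i + 1) (ℓ - 1), (T α i j) ^ 2))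
        + ∑ β ∈ range ℓ,
          (((s : ℝ) + 3) * ∑ i ∈ range (s - 1), (A β i i) ^ 2
            + ((s : ℝ) + 5) / 2 * (A β (s - 1) (s - 1)) ^ 2
            + 2 * ((s : ℝ) + 3) * ∑ i ∈ range (s - 1), ∑ j ∈ Ico (i + 1) (s - 1), (A β i j) ^ 2
            + ((s : ℝ) + 5) * ∑ i ∈ range (s - 1), (A β i (s - 1)) ^ 2
            - ∑ i ∈ range s, ∑ j ∈ range s, A β i i * A β j j) := by
  have hlr : (3 : ℝ) ≤ (ℓ : ℝ) := by exact_mod_cast hl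
  have hsr : (3 : ℝ) ≤ (s : ℝ) := by exact_mod_cast hs
  refine add_nonneg (sum_nonneg fun α _ => ?_) (sum_nonneg fun β _ => ?_)
  · have h1 := T_part ℓ hl (fun i => T α i i)
    have h2 : 0 ≤ ((ℓ : ℝ) + 1) * ∑ i ∈ range (ℓ - 1), (T α i (ℓ - 1)) ^ 2 := by positivity
    have h3 : 0 ≤ 2 * ((ℓ : ℝ) + 1)
        * ∑ i ∈ range (ℓ - 1), ∑ j ∈ Ico (i + 1) (ℓ - 1), (T α i j) ^ 2 := by positivity
    linarith
  · have hA0 : ∀ i, A β i i = 0 := fun i => by have := hantA β i i; linarith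
    simp only [hA0, ne_eq, OfNat.ofNat_ne_zero, not_false_eq_true, zero_pow, zero_mul,
      mul_zero, sum_const_zero, add_zero, zero_add, sub_zero]
    positivity
end
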